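/- Fix s, t ∈ ℂ and let F = X⁴ + s·Z⁴ + Z²·Y·W + Z·W³ − t·W⁴ ∈ ℂ[X,Y,Z,W], the homogenization of the polynomial x⁴ + s·z⁴ + z²y + z of the paper's Example 8.5 with the fibre equation subtracted. Then: (i) if s ≠ 0, the common zeros in ℂ⁴∖{0} of the four partial derivatives of F are exactly the nonzero multiples of (0,1,0,0), so the projective hypersurface {F = 0} ⊂ ℙ³ has a unique singular point [0:1:0:0]; (ii) if s = 0, the common zeros in ℂ⁴∖{0} of the four partial derivatives of F are exactly the nonzero multiples of (0,1,0,0) and of (0,0,1,0), so {F = 0} has exactly the two singular points [0:1:0:0] and [0:0:1:0]. -/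
import Mathlib


open MvPolynomial

noncomputable section

/-- F = X⁴ + s·Z⁴ + Z²·Y·W + Z·W³ − t·W⁴, the homogenization of x⁴ + sz⁴ + z²y + z of
    Example 8.5 with the fibre equation subtracted
    (variables: X 0 = X, X 1 = Y, X 2 = Z, X 3 = W). -/
def F₈₅ (s t : ℂ) : MvPolynomial (Fin 4) ℂ :=
  X 0 ^ 4 + C s * X 2 ^ 4 + X 2 ^ 2 * X 1 * X 3 + X 2 * X 3 ^ 3 - C t * X 3 ^ 4

lemma ev0 (s t : ℂ) (v : Fin 4 → ℂ) : eval v (pderiv 0 (F₈₅ s t)) = 4 * v 0 ^ 3 := by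
  simp [F₈₅, pderiv_X]
lemma ev1 (s t : ℂ) (v : Fin 4 → ℂ) : eval v (pderiv 1 (F₈₅ s t)) = v 2 ^ 2 * v 3 := by
  simp [F₈₅, pderiv_X]; ring
lemma ev2 (s t : ℂ) (v : Fin 4 → ℂ) :
    eval v (pderiv 2 (F₈₅ s t)) = 4*s*v 2^3 + 2*v 2*v 1*v 3 + v 3^3 := by
  simp [F₈₅, pderiv_X]; ring
lemma ev3 (s t : ℂ) (v : Fin 4 → ℂ) :
    eval v (pderiv 3 (F₈₅ s t)) = v 2^2*v 1 + 3*v 2*v 3^2 - 4*t*v 3^3 := by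
  simp [F₈₅, pderiv_X]; ring

set_option linter.unnecessarySeqFocus false in
lemma crit_iff (s t : ℂ) (v : Fin 4 → ℂ) :
    (∀ i : Fin 4, eval v (pderiv i (F₈₅ s t)) = 0) ↔
      ((v 0 = 0 ∧ v 2 = 0 ∧ v 3 = 0) ∨ (s = 0 ∧ v 0 = 0 ∧ v 1 = 0 ∧ v 3 = 0)) := by
  have hall : (∀ i : Fin 4, eval v (pderiv i (F₈₅ s t)) = 0) ↔
      (4 * v 0 ^ 3 = 0 ∧ v 2 ^ 2 * v 3 = 0 ∧
        4*s*v 2^3 + 2*v 2*v 1*v 3 + v 3^3 = 0 ∧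
        v 2^2*v 1 + 3*v 2*v 3^2 - 4*t*v 3^3 = 0) := by
    constructor
    · intro h
      exact ⟨by rw [← ev0 s t v]; exact h 0, by rw [← ev1 s t v]; exact h 1,
        by rw [← ev2 s t v]; exact h 2, by rw [← ev3 s t v]; exact h 3⟩
    · rintro ⟨a, b, c, d⟩ i
      fin_cases i
      · show eval v (pderiv 0 (F₈₅ s t)) = 0; rw [ev0]; exact a
      · show eval v (pderiv 1 (F₈₅ s t)) = 0; rw [ev1]; exact b
      · show eval v (pderiv 2 (F₈₅ s t)) = 0; rw [ev2]; exact c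
      · show eval v (pderiv 3 (F₈₅ s t)) = 0; rw [ev3]; exact d
  rw [hall]
  constructor
  · rintro ⟨h0, h1, h2, h3⟩
    have hv0 : v 0 = 0 := by
      have : v 0 ^ 3 = 0 := by linear_combination h0 / 4
      exact pow_eq_zero_iff (by norm_num) |>.1 this
    by_cases h3' : v 3 = 0
    · rw [h3'] at h2 h3
      simp at h2 h3
      rcases h3 with hc | hc
      · exact Or.inl ⟨hv0, hc, h3'⟩
      · rcases h2 with hs | hc2
        · exact Or.inr ⟨hs, hv0, hc, h3'⟩
        · exact Or.inl ⟨hv0, hc2, h3'⟩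
    · exfalso
      have hv2 : v 2 = 0 := by
        rcases mul_eq_zero.1 h1 with h | h
        · exact pow_eq_zero_iff (by norm_num) |>.1 h
        · exact absurd h h3'
      rw [hv2] at h2
      simp at h2
      exact h3' h2
  · rintro (⟨a, b, c⟩ | ⟨hs, a, b, c⟩) <;> refine ⟨?_, ?_, ?_, ?_⟩ <;>
      simp [a, b, c] <;> simp [hs]

lemma mult_iff1 (v : Fin 4 → ℂ) (hv : v ≠ 0) :
    (v 0 = 0 ∧ v 2 = 0 ∧ v 3 = 0) ↔ (∃ c : ℂ, c ≠ 0 ∧ v = c • ![0, 1, 0, 0]) := by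
  constructor
  · rintro ⟨a, b, c⟩
    refine ⟨v 1, ?_, ?_⟩
    · intro h1
      exact hv (funext fun i => by fin_cases i <;> assumption)
    · funext i; fin_cases i <;> simp [a, b, c]
  · rintro ⟨c, hc, rfl⟩
    refine ⟨by simp, by simp, by simp⟩

lemma mult_iff2 (v : Fin 4 → ℂ) (hv : v ≠ 0) :
    (v 0 = 0 ∧ v 1 = 0 ∧ v 3 = 0) ↔ (∃ c : ℂ, c ≠ 0 ∧ v = c • ![0, 0, 1, 0]) := by
  constructor
  · rintro ⟨a, b, c⟩
    refine ⟨v 2, ?_, ?_⟩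
    · intro h1
      exact hv (funext fun i => by fin_cases i <;> assumption)
    · funext i; fin_cases i <;> simp [a, b, c]
  · rintro ⟨c, hc, rfl⟩
    refine ⟨by simp, by simp, by simp⟩

lemma eq_mk_iff (p : Projectivization ℂ (Fin 4 → ℂ)) (w : Fin 4 → ℂ) (hw : w ≠ 0) :
    p = Projectivization.mk ℂ w hw ↔ ∃ c : ℂ, c ≠ 0 ∧ p.rep = c • w := by
  conv_lhs => rw [← Projectivization.mk_rep p]
  rw [Projectivization.mk_eq_mk_iff ℂ _ _ p.rep_nonzero hw]
  constructor
  · rintro ⟨a, ha⟩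
    exact ⟨a, a.ne_zero, ha.symm⟩
  · rintro ⟨c, hc, h⟩
    exact ⟨Units.mk0 c hc, h.symm⟩

/-- (i) if s ≠ 0, the common zeros in ℂ⁴∖{0} of the four partial derivatives of F are
    exactly the nonzero multiples of (0,1,0,0), so {F = 0} ⊂ ℙ³ has the unique singular
    point [0:1:0:0];
    (ii) if s = 0, they are exactly the nonzero multiples of (0,1,0,0) and of (0,0,1,0),
    so {F = 0} has exactly the two singular points [0:1:0:0] and [0:0:1:0]. -/
theorem singular_points_example85 (s t : ℂ) :
    (s ≠ 0 →
      (∀ v : Fin 4 → ℂ, v ≠ 0 →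
        ((∀ i : Fin 4, eval v (pderiv i (F₈₅ s t)) = 0) ↔
          (∃ c : ℂ, c ≠ 0 ∧ v = c • ![0, 1, 0, 0]))) ∧
      {p : Projectivization ℂ (Fin 4 → ℂ) |
          ∀ i : Fin 4, eval p.rep (pderiv i (F₈₅ s t)) = 0}
        = {Projectivization.mk ℂ ![0, 1, 0, 0]
            (fun h => by simpa using congrFun h 1)}) ∧
    (s = 0 →
      (∀ v : Fin 4 → ℂ, v ≠ 0 →
        ((∀ i : Fin 4, eval v (pderiv i (F₈₅ s t)) = 0) ↔
          ((∃ c : ℂ, c ≠ 0 ∧ v = c • ![0, 1, 0, 0]) ∨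
           (∃ c : ℂ, c ≠ 0 ∧ v = c • ![0, 0, 1, 0])))) ∧
      {p : Projectivization ℂ (Fin 4 → ℂ) |
          ∀ i : Fin 4, eval p.rep (pderiv i (F₈₅ s t)) = 0}
        = {Projectivization.mk ℂ ![0, 1, 0, 0]
            (fun h => by simpa using congrFun h 1),
           Projectivization.mk ℂ ![0, 0, 1, 0]
            (fun h => by simpa using congrFun h 2)}) := by
  constructor
  · intro hs
    have key : ∀ v : Fin 4 → ℂ, v ≠ 0 →
        ((∀ i : Fin 4, eval v (pderiv i (F₈₅ s t)) = 0) ↔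
          (∃ c : ℂ, c ≠ 0 ∧ v = c • ![0, 1, 0, 0])) := by
      intro v hv
      rw [crit_iff, ← mult_iff1 v hv]
      constructor
      · rintro (h | h)
        · exact h
        · exact absurd h.1 hs
      · exact Or.inl
    refine ⟨key, ?_⟩
    ext p
    simp only [Set.mem_setOf_eq, Set.mem_singleton_iff]
    rw [key p.rep p.rep_nonzero, eq_mk_iff]
  · intro hs
    have key : ∀ v : Fin 4 → ℂ, v ≠ 0 →
        ((∀ i : Fin 4, eval v (pderiv i (F₈₅ s t)) = 0) ↔
          ((∃ c : ℂ, c ≠ 0 ∧ v = c • ![0, 1, 0, 0]) ∨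
           (∃ c : ℂ, c ≠ 0 ∧ v = c • ![0, 0, 1, 0]))) := by
      intro v hv
      rw [crit_iff, ← mult_iff1 v hv, ← mult_iff2 v hv]
      constructor
      · rintro (h | h)
        · exact Or.inl h
        · exact Or.inr h.2
      · rintro (h | h)
        · exact Or.inl h
        · exact Or.inr ⟨hs, h⟩
    refine ⟨key, ?_⟩
    ext p
    simp only [Set.mem_setOf_eq, Set.mem_insert_iff, Set.mem_singleton_iff]
    rw [key p.rep p.rep_nonzero, eq_mk_iff, eq_mk_iff]
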